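/- arXiv:1911.13223 — 3 statements merged into one kernel-verified Lean document; each statement's English description precedes it below -/
import Mathlib

section
/- Let γ_s = γ parametrized by affine arc length; if γ lies on a conic section (ellipse, parabola, or hyperbola), then its affine curvature μ(s) = [γ_ss, γ_sss] is constant. -/
open Real

/-- `det2 u v` is the determinant of the 2×2 matrix with columns `u` and `v`. -/
noncomputable def det2 (u v : ℝ × ℝ) : ℝ := u.1 * v.2 - u.2 * v.1

noncomputable def xc (γ : ℝ → ℝ × ℝ) (n : ℕ) (s : ℝ) : ℝ := (iteratedDeriv n γ s).1
noncomputable def yc (γ : ℝ → ℝ × ℝ) (n : ℕ) (s : ℝ) : ℝ := (iteratedDeriv n γ s).2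

lemma hasDerivAt_G {γ : ℝ → ℝ × ℝ} (hγ : ContDiff ℝ (⊤ : ℕ∞) γ) (n : ℕ) (s : ℝ) :
    HasDerivAt (iteratedDeriv n γ) (iteratedDeriv (n+1) γ s) s := by
  have h1 : ContDiff ℝ (⊤ : ℕ∞) (iteratedDeriv n γ) := by
    rw [iteratedDeriv_eq_iterate]
    exact (hγ.of_le (by simp)).iterate_deriv n
  have := (h1.differentiable (by simp)).differentiableAt (x := s)
  rw [iteratedDeriv_succ]
  exact this.hasDerivAt

lemma hasDerivAt_xc {γ : ℝ → ℝ × ℝ} (hγ : ContDiff ℝ (⊤ : ℕ∞) γ) (n : ℕ) (s : ℝ) :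
    HasDerivAt (xc γ n) (xc γ (n+1) s) s := by
  exact hasFDerivAt_fst.comp_hasDerivAt s (hasDerivAt_G hγ n s)

lemma hasDerivAt_yc {γ : ℝ → ℝ × ℝ} (hγ : ContDiff ℝ (⊤ : ℕ∞) γ) (n : ℕ) (s : ℝ) :
    HasDerivAt (yc γ n) (yc γ (n+1) s) s := by
  exact hasFDerivAt_snd.comp_hasDerivAt s (hasDerivAt_G hγ n s)

lemma deriv_of_const {f : ℝ → ℝ} {D s : ℝ} (h : HasDerivAt f D s) {k : ℝ}
    (hf : ∀ t, f t = k) : D = 0 := by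
  have hf' : f = fun _ => k := funext hf
  rw [hf'] at h
  exact h.unique (hasDerivAt_const s k)

/-- If a curve parametrized by affine arc length lies on a conic section (the zero set
of a quadratic polynomial with nonzero quadratic part), then its affine curvature
`μ(s) = [γ_ss, γ_sss]` is constant. -/
theorem stmt6 (γ : ℝ → ℝ × ℝ) (hγ : ContDiff ℝ (⊤ : ℕ∞) γ)
    (h1 : ∀ s, det2 (deriv γ s) (iteratedDeriv 2 γ s) = 1)
    (a b c d e g : ℝ) (hquad : (a, b, c) ≠ (0, 0, 0))
    (hon : ∀ s, a * (γ s).1^2 + b * (γ s).1 * (γ s).2 + c * (γ s).2^2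
          + d * (γ s).1 + e * (γ s).2 + g = 0) :
    ∃ m : ℝ, ∀ s, det2 (iteratedDeriv 2 γ s) (iteratedDeriv 3 γ s) = m := by
  set x := xc γ with hxdef
  set y := yc γ with hydef
  have hx : ∀ (n : ℕ) (s : ℝ), HasDerivAt (x n) (x (n+1) s) s := fun n s => hasDerivAt_xc hγ n s
  have hy : ∀ (n : ℕ) (s : ℝ), HasDerivAt (y n) (y (n+1) s) s := fun n s => hasDerivAt_yc hγ n s
  have hx0γ : ∀ t, x 0 t = (γ t).1 := fun t => by simp [hxdef, xc]
  have hy0γ : ∀ t, y 0 t = (γ t).2 := fun t => by simp [hydef, yc]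
  -- E0 : the conic equation in combinator-friendly shape
  have E0 : ∀ t, a*(x 0 t*x 0 t) + b*(x 0 t*y 0 t) + c*(y 0 t*y 0 t)
      + d*x 0 t + e*y 0 t + g = 0 := by
    intro t
    rw [hx0γ, hy0γ]
    linear_combination hon t
  -- E1 : first derivative of conic equation
  have E1 : ∀ s, 2*a*(x 0 s*x 1 s) + b*(x 1 s*y 0 s + x 0 s*y 1 s) + 2*c*(y 0 s*y 1 s)
      + d*x 1 s + e*y 1 s = 0 := by
    intro s
    have chain := ((((((hx 0 s).mul (hx 0 s)).const_mul a).add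
        (((hx 0 s).mul (hy 0 s)).const_mul b)).add
        (((hy 0 s).mul (hy 0 s)).const_mul c)).add
        ((hx 0 s).const_mul d)).add ((hy 0 s).const_mul e) |>.add_const g
    have raw := deriv_of_const chain E0
    linear_combination raw
  -- E2 : second derivative
  have E2 : ∀ s, 2*a*(x 1 s*x 1 s + x 0 s*x 2 s)
      + b*(x 2 s*y 0 s + 2*(x 1 s*y 1 s) + x 0 s*y 2 s)
      + 2*c*(y 1 s*y 1 s + y 0 s*y 2 s) + d*x 2 s + e*y 2 s = 0 := by
    intro s
    have chain := (((((hx 0 s).mul (hx 1 s)).const_mul (2*a)).add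
        ((((hx 1 s).mul (hy 0 s)).add ((hx 0 s).mul (hy 1 s))).const_mul b)).add
        (((hy 0 s).mul (hy 1 s)).const_mul (2*c))).add
        ((hx 1 s).const_mul d) |>.add ((hy 1 s).const_mul e)
    have raw := deriv_of_const chain E1
    linear_combination raw
  -- E3 : third derivative
  have E3 : ∀ s, 2*a*(3*(x 1 s*x 2 s) + x 0 s*x 3 s)
      + b*(x 3 s*y 0 s + 3*(x 2 s*y 1 s) + 3*(x 1 s*y 2 s) + x 0 s*y 3 s)
      + 2*c*(3*(y 1 s*y 2 s) + y 0 s*y 3 s) + d*x 3 s + e*y 3 s = 0 := by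
    intro s
    have chain := ((((((hx 1 s).mul (hx 1 s)).add ((hx 0 s).mul (hx 2 s))).const_mul (2*a)).add
        (((((hx 2 s).mul (hy 0 s)).add (((hx 1 s).mul (hy 1 s)).const_mul 2)).add
          ((hx 0 s).mul (hy 2 s))).const_mul b)).add
        ((((hy 1 s).mul (hy 1 s)).add ((hy 0 s).mul (hy 2 s))).const_mul (2*c))).add
        ((hx 2 s).const_mul d) |>.add ((hy 2 s).const_mul e)
    have raw := deriv_of_const chain E2
    linear_combination raw
  -- Edet : unit affine speed
  have Edet : ∀ s, x 1 s*y 2 s - y 1 s*x 2 s = 1 := by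
    intro s
    have h := h1 s
    have e1 : x 1 s = (deriv γ s).1 := by simp [hxdef, xc, iteratedDeriv_one]
    have e2 : y 1 s = (deriv γ s).2 := by simp [hydef, yc, iteratedDeriv_one]
    have e3 : x 2 s = (iteratedDeriv 2 γ s).1 := by simp [hxdef, xc]
    have e4 : y 2 s = (iteratedDeriv 2 γ s).2 := by simp [hydef, yc]
    rw [e1, e2, e3, e4]
    simpa [det2] using h
  -- Edet' : derivative of Edet
  have Edet' : ∀ s, x 1 s*y 3 s - y 1 s*x 3 s = 0 := by
    intro s
    have chain := ((hx 1 s).mul (hy 2 s)).sub ((hy 1 s).mul (hx 2 s))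
    have raw := deriv_of_const chain Edet
    linear_combination raw
  -- gamma''' = -mu gamma'
  have hx3 : ∀ s, x 3 s + (x 2 s*y 3 s - y 2 s*x 3 s)*x 1 s = 0 := by
    intro s
    linear_combination (-(x 3 s))*Edet s + (x 2 s)*Edet' s
  have hy3 : ∀ s, y 3 s + (x 2 s*y 3 s - y 2 s*x 3 s)*y 1 s = 0 := by
    intro s
    linear_combination (-(y 3 s))*Edet s + (y 2 s)*Edet' s
  -- C12 : B(gamma', gamma'') = 0
  have C12 : ∀ s, 2*a*(x 1 s*x 2 s) + b*(x 1 s*y 2 s + y 1 s*x 2 s) + 2*c*(y 1 s*y 2 s) = 0 := by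
    intro s
    linear_combination (E3 s - (2*a*x 0 s + b*y 0 s + d)*hx3 s - (b*x 0 s + 2*c*y 0 s + e)*hy3 s
      + (x 2 s*y 3 s - y 2 s*x 3 s)*E1 s)/3
  -- E4 : B(gamma'',gamma'') = mu * B(gamma',gamma')
  have E4 : ∀ s, a*(x 2 s*x 2 s) + b*(x 2 s*y 2 s) + c*(y 2 s*y 2 s)
      = (x 2 s*y 3 s - y 2 s*x 3 s)*(a*(x 1 s*x 1 s) + b*(x 1 s*y 1 s) + c*(y 1 s*y 1 s)) := by
    intro s
    have chain := ((((hx 1 s).mul (hx 2 s)).const_mul (2*a)).add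
        ((((hx 1 s).mul (hy 2 s)).add ((hy 1 s).mul (hx 2 s))).const_mul b)).add
        (((hy 1 s).mul (hy 2 s)).const_mul (2*c))
    have raw := deriv_of_const chain C12
    linear_combination raw/2 - (a*x 1 s + (b/2)*y 1 s)*hx3 s - ((b/2)*x 1 s + c*y 1 s)*hy3 s
  -- E5 : mu' * B(gamma',gamma') = 0
  have E5 : ∀ s, (x 2 s*y 4 s - y 2 s*x 4 s)
      * (a*(x 1 s*x 1 s) + b*(x 1 s*y 1 s) + c*(y 1 s*y 1 s)) = 0 := by
    intro s
    have hB11 := (((hx 1 s).mul (hx 1 s)).const_mul a).add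
        (((hx 1 s).mul (hy 1 s)).const_mul b) |>.add (((hy 1 s).mul (hy 1 s)).const_mul c)
    have hmu := ((hx 2 s).mul (hy 3 s)).sub ((hy 2 s).mul (hx 3 s))
    have chain := ((((hx 2 s).mul (hx 2 s)).const_mul a).add
        (((hx 2 s).mul (hy 2 s)).const_mul b) |>.add
        (((hy 2 s).mul (hy 2 s)).const_mul c)).sub (hmu.mul hB11)
    have hK : ∀ t, a*(x 2 t*x 2 t) + b*(x 2 t*y 2 t) + c*(y 2 t*y 2 t)
        - (x 2 t*y 3 t - y 2 t*x 3 t)*(a*(x 1 t*x 1 t) + b*(x 1 t*y 1 t) + c*(y 1 t*y 1 t))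
        = 0 := fun t => by linear_combination E4 t
    have raw := deriv_of_const chain hK
    simp only [Pi.mul_apply, Pi.sub_apply, Pi.add_apply, show (2:ℕ)+1 = 3 from rfl,
      show (1:ℕ)+1 = 2 from rfl, show (3:ℕ)+1 = 4 from rfl] at raw
    linear_combination -raw + (2*a*x 2 s + b*y 2 s)*hx3 s + (b*x 2 s + 2*c*y 2 s)*hy3 s
      - (2*(x 2 s*y 3 s - y 2 s*x 3 s))*C12 s
  -- B(gamma',gamma') never vanishes
  have hB11ne : ∀ s, a*(x 1 s*x 1 s) + b*(x 1 s*y 1 s) + c*(y 1 s*y 1 s) ≠ 0 := by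
    intro s hB11
    have hB22 : a*(x 2 s*x 2 s) + b*(x 2 s*y 2 s) + c*(y 2 s*y 2 s) = 0 := by
      linear_combination E4 s + (x 2 s*y 3 s - y 2 s*x 3 s)*hB11
    have ha : a = 0 := by
      linear_combination (y 2 s)^2*hB11 - (y 1 s*y 2 s)*C12 s + (y 1 s)^2*hB22
        - a*(x 1 s*y 2 s - y 1 s*x 2 s + 1)*Edet s
    have hc : c = 0 := by
      linear_combination (x 2 s)^2*hB11 - (x 1 s*x 2 s)*C12 s + (x 1 s)^2*hB22
        - c*(x 1 s*y 2 s - y 1 s*x 2 s + 1)*Edet s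
    have hb : b = 0 := by
      linear_combination (-2*(x 2 s*y 2 s))*hB11 + (x 1 s*y 2 s + y 1 s*x 2 s)*C12 s
        + (-2*(x 1 s*y 1 s))*hB22 - b*(x 1 s*y 2 s - y 1 s*x 2 s + 1)*Edet s
    exact hquad (by rw [ha, hb, hc])
  -- mu' = 0
  have hmu' : ∀ s, x 2 s*y 4 s - y 2 s*x 4 s = 0 := by
    intro s
    rcases mul_eq_zero.1 (E5 s) with h | h
    · exact h
    · exact absurd h (hB11ne s)
  -- mu is constant
  have hM0 : ∀ s, HasDerivAt (fun t => x 2 t*y 3 t - y 2 t*x 3 t) 0 s := by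
    intro s
    have chain := ((hx 2 s).mul (hy 3 s)).sub ((hy 2 s).mul (hx 3 s))
    simp only [show (2:ℕ)+1 = 3 from rfl, show (3:ℕ)+1 = 4 from rfl] at chain
    exact chain.congr_deriv (by linear_combination hmu' s)
  refine ⟨x 2 0*y 3 0 - y 2 0*x 3 0, fun s => ?_⟩
  have hd2 : det2 (iteratedDeriv 2 γ s) (iteratedDeriv 3 γ s) = x 2 s*y 3 s - y 2 s*x 3 s := by
    simp [det2, hxdef, hydef, xc, yc]
  rw [hd2]
  exact is_const_of_deriv_eq_zero (fun t => (hM0 t).differentiableAt)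
    (fun t => (hM0 t).deriv) s 0
end

section
/- With F the family of intermediate lines, if the envelope condition ν₁(C) = −λν₂(C) holds (λ = ((1−α)/α)^(1/3)), then the solution X of F = F_s = F_t = 0 satisfies X − M_α = [αν₁(C) / (αν₂(γ₁′)ν₁(C) + bν₂²(C))] · [ (1−α)ν₂(C)γ₁′ − (αν₁(C)ν₂(γ₁′)/ν₁(γ₂′))γ₂′ ]. -/
open Real
open scoped ContDiff

/-- The co-normal of the curve `γ` at parameter `t`. -/
noncomputable def conormal (γ : ℝ → ℝ × ℝ) (t : ℝ) (U : ℝ × ℝ) : ℝ :=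
  det2 (deriv γ t) U / (det2 (deriv γ t) (iteratedDeriv 2 γ t)) ^ ((1:ℝ)/3)

/-- The family of intermediate lines. -/
noncomputable def interF (γ₁ γ₂ : ℝ → ℝ × ℝ) (α t s : ℝ) (X : ℝ × ℝ) : ℝ :=
  (1 - α) * conormal γ₂ s (γ₂ s - γ₁ t)
      * conormal γ₁ t (X - ((1 - α) • γ₁ t + α • γ₂ s))
    + α * conormal γ₁ t (γ₂ s - γ₁ t)
      * conormal γ₂ s (X - ((1 - α) • γ₁ t + α • γ₂ s))

theorem HasDerivAt.fst2 {f : ℝ → ℝ × ℝ} {f' : ℝ × ℝ} {x : ℝ} (h : HasDerivAt f f' x) :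
    HasDerivAt (fun u => (f u).1) f'.1 x := by
  exact ((ContinuousLinearMap.fst ℝ ℝ ℝ).hasFDerivAt.comp_hasDerivAt x h)

theorem HasDerivAt.snd2 {f : ℝ → ℝ × ℝ} {f' : ℝ × ℝ} {x : ℝ} (h : HasDerivAt f f' x) :
    HasDerivAt (fun u => (f u).2) f'.2 x := by
  exact ((ContinuousLinearMap.snd ℝ ℝ ℝ).hasFDerivAt.comp_hasDerivAt x h)

theorem keyD (γ : ℝ → ℝ × ℝ) (hγ : ContDiff ℝ ∞ γ)
    (hκ : ∀ t, 0 < det2 (deriv γ t) (iteratedDeriv 2 γ t)) (t : ℝ)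
    (V : ℝ → ℝ × ℝ) (V' : ℝ × ℝ) (hV : HasDerivAt V V' t) :
    HasDerivAt (fun u => conormal γ u (V u))
      (((((iteratedDeriv 2 γ t).1 * (V t).2 + (deriv γ t).1 * V'.2)
          - ((iteratedDeriv 2 γ t).2 * (V t).1 + (deriv γ t).2 * V'.1))
          * ((det2 (deriv γ t) (iteratedDeriv 2 γ t)) ^ ((1:ℝ)/3))
        - ((deriv γ t).1 * (V t).2 - (deriv γ t).2 * (V t).1)
          * deriv (fun u => (det2 (deriv γ u) (iteratedDeriv 2 γ u)) ^ ((1:ℝ)/3)) t)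
        / ((det2 (deriv γ t) (iteratedDeriv 2 γ t)) ^ ((1:ℝ)/3)) ^ 2) t := by
  have hγ' : ContDiff ℝ ∞ (deriv γ) := (contDiff_infty_iff_deriv.mp hγ).2
  have hγ'' : ContDiff ℝ ∞ (deriv (deriv γ)) := (contDiff_infty_iff_deriv.mp hγ').2
  have h2 : iteratedDeriv 2 γ = deriv (deriv γ) := by
    rw [show (2:ℕ) = 1 + 1 from rfl, iteratedDeriv_succ, iteratedDeriv_one]
  have hd1 : HasDerivAt (deriv γ) (iteratedDeriv 2 γ t) t := by
    rw [h2]; exact ((contDiff_infty_iff_deriv.mp hγ').1 t).hasDerivAt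
  have hd2 : HasDerivAt (iteratedDeriv 2 γ) (deriv (deriv (deriv γ)) t) t := by
    rw [h2]; exact ((contDiff_infty_iff_deriv.mp hγ'').1 t).hasDerivAt
  have hA1 := hd1.fst2
  have hA2 := hd1.snd2
  have hB1 := hd2.fst2
  have hB2 := hd2.snd2
  have hV1 := hV.fst2
  have hV2 := hV.snd2
  have hκdiff : DifferentiableAt ℝ (fun u => det2 (deriv γ u) (iteratedDeriv 2 γ u)) t := by
    simp only [det2]
    exact ((hA1.mul hB2).sub (hA2.mul hB1)).differentiableAt
  have hcne : (det2 (deriv γ t) (iteratedDeriv 2 γ t)) ^ ((1:ℝ)/3) ≠ 0 :=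
    (Real.rpow_pos_of_pos (hκ t) _).ne'
  have hcd : HasDerivAt (fun u => (det2 (deriv γ u) (iteratedDeriv 2 γ u)) ^ ((1:ℝ)/3))
      (deriv (fun u => (det2 (deriv γ u) (iteratedDeriv 2 γ u)) ^ ((1:ℝ)/3)) t) t := by
    exact (hκdiff.rpow_const (Or.inl (hκ t).ne')).hasDerivAt
  have hnum : HasDerivAt (fun u => (deriv γ u).1 * (V u).2 - (deriv γ u).2 * (V u).1)
      (((iteratedDeriv 2 γ t).1 * (V t).2 + (deriv γ t).1 * V'.2)
        - ((iteratedDeriv 2 γ t).2 * (V t).1 + (deriv γ t).2 * V'.1)) t :=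
    (hA1.mul hV2).sub (hA2.mul hV1)
  exact hnum.div hcd hcne

theorem key2 (γ : ℝ → ℝ × ℝ) (s : ℝ) (V : ℝ → ℝ × ℝ) (V' : ℝ × ℝ) (t : ℝ)
    (hV : HasDerivAt V V' t) :
    HasDerivAt (fun u => conormal γ s (V u)) (conormal γ s V') t := by
  exact ((hV.snd2.const_mul ((deriv γ s).1)).sub (hV.fst2.const_mul ((deriv γ s).2))).div_const _

set_option maxHeartbeats 2000000 in
/-- If the envelope condition `ν₁(C) = −λν₂(C)` holds, the solution `X` of
`F = F_s = F_t = 0` satisfies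
`X − M_α = [αν₁(C)/(αν₂(γ₁′)ν₁(C) + bν₂²(C))] • ((1−α)ν₂(C)γ₁′ − (αν₁(C)ν₂(γ₁′)/ν₁(γ₂′))γ₂′)`,
where `b = ν₁′(γ₁′)/ν₂(γ₁′)`. -/
theorem stmt11 (γ₁ γ₂ : ℝ → ℝ × ℝ) (α lam t₀ s₀ : ℝ) (X : ℝ × ℝ)
    (n1C n2C n2g1 n1g2 b : ℝ)
    (hγ₁ : ContDiff ℝ (⊤ : ℕ∞) γ₁) (hγ₂ : ContDiff ℝ (⊤ : ℕ∞) γ₂)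
    (hα : α ∈ Set.Ioo (0:ℝ) 1)
    (hlam : lam = ((1 - α)/α) ^ ((1:ℝ)/3))
    (hκ₁ : ∀ t, 0 < det2 (deriv γ₁ t) (iteratedDeriv 2 γ₁ t))
    (hκ₂ : ∀ s, 0 < det2 (deriv γ₂ s) (iteratedDeriv 2 γ₂ s))
    (hind : LinearIndependent ℝ ![deriv γ₁ t₀, deriv γ₂ s₀])
    (hn1C : n1C = conormal γ₁ t₀ (γ₂ s₀ - γ₁ t₀))
    (hn2C : n2C = conormal γ₂ s₀ (γ₂ s₀ - γ₁ t₀))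
    (hn2g1 : n2g1 = conormal γ₂ s₀ (deriv γ₁ t₀))
    (hn1g2 : n1g2 = conormal γ₁ t₀ (deriv γ₂ s₀))
    (hb : b = deriv (fun u => conormal γ₁ u (deriv γ₁ t₀)) t₀ / n2g1)
    (henv : n1C = -lam * n2C)
    (hsol : interF γ₁ γ₂ α t₀ s₀ X = 0 ∧
        deriv (fun s => interF γ₁ γ₂ α t₀ s X) s₀ = 0 ∧
        deriv (fun t => interF γ₁ γ₂ α t s₀ X) t₀ = 0) :
    X - ((1 - α) • γ₁ t₀ + α • γ₂ s₀) =
      (α * n1C / (α * n2g1 * n1C + b * n2C^2)) •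
        (((1 - α) * n2C) • deriv γ₁ t₀
          - (α * n1C * n2g1 / n1g2) • deriv γ₂ s₀) := by
  obtain ⟨hα0, hα1⟩ := hα
  obtain ⟨hF0, hFs, hFt⟩ := hsol
  have h1α : (0:ℝ) < 1 - α := by linarith
  have hγ₁i : ContDiff ℝ ∞ γ₁ := hγ₁.of_le (by simp)
  have hγ₂i : ContDiff ℝ ∞ γ₂ := hγ₂.of_le (by simp)
  have hd1 : HasDerivAt γ₁ (deriv γ₁ t₀) t₀ := ((hγ₁.differentiable (by simp)) t₀).hasDerivAt
  have hd2 : HasDerivAt γ₂ (deriv γ₂ s₀) s₀ := ((hγ₂.differentiable (by simp)) s₀).hasDerivAt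
  -- the determinant of the two tangents is nonzero
  have hδ : (deriv γ₁ t₀).1 * (deriv γ₂ s₀).2 - (deriv γ₁ t₀).2 * (deriv γ₂ s₀).1 ≠ 0 := by
    intro hdet
    rw [LinearIndependent.pair_iff] at hind
    have e1 := hind ((deriv γ₂ s₀).1) (-((deriv γ₁ t₀).1)) (by
      apply Prod.ext
      · show (deriv γ₂ s₀).1 * (deriv γ₁ t₀).1 + -((deriv γ₁ t₀).1) * (deriv γ₂ s₀).1 = 0
        ring
      · show (deriv γ₂ s₀).1 * (deriv γ₁ t₀).2 + -((deriv γ₁ t₀).1) * (deriv γ₂ s₀).2 = 0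
        linear_combination -hdet)
    have e2 := hind ((deriv γ₂ s₀).2) (-((deriv γ₁ t₀).2)) (by
      apply Prod.ext
      · show (deriv γ₂ s₀).2 * (deriv γ₁ t₀).1 + -((deriv γ₁ t₀).2) * (deriv γ₂ s₀).1 = 0
        linear_combination hdet
      · show (deriv γ₂ s₀).2 * (deriv γ₁ t₀).2 + -((deriv γ₁ t₀).2) * (deriv γ₂ s₀).2 = 0
        ring)
    have hu1 : (deriv γ₁ t₀).1 = 0 := by have := e1.2; linarith [neg_eq_zero.mp this]
    have hu2 : (deriv γ₁ t₀).2 = 0 := by have := e2.2; linarith [neg_eq_zero.mp this]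
    have e3 := hind 1 0 (by
      apply Prod.ext
      · show 1 * (deriv γ₁ t₀).1 + 0 * (deriv γ₂ s₀).1 = 0
        rw [hu1]; ring
      · show 1 * (deriv γ₁ t₀).2 + 0 * (deriv γ₂ s₀).2 = 0
        rw [hu2]; ring)
    exact one_ne_zero e3.1
  -- abbreviations
  set a1 := (deriv γ₁ t₀).1 with ha1
  set a2 := (deriv γ₁ t₀).2 with ha2
  set b1 := (deriv γ₂ s₀).1 with hb1
  set b2 := (deriv γ₂ s₀).2 with hb2
  set A1 := (iteratedDeriv 2 γ₁ t₀).1 with hA1d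
  set A2 := (iteratedDeriv 2 γ₁ t₀).2 with hA2d
  set B1 := (iteratedDeriv 2 γ₂ s₀).1 with hB1d
  set B2 := (iteratedDeriv 2 γ₂ s₀).2 with hB2d
  set s1 := (det2 (deriv γ₁ t₀) (iteratedDeriv 2 γ₁ t₀)) ^ ((1:ℝ)/3) with hs1d
  set s2 := (det2 (deriv γ₂ s₀) (iteratedDeriv 2 γ₂ s₀)) ^ ((1:ℝ)/3) with hs2d
  set cd1 := deriv (fun u => (det2 (deriv γ₁ u) (iteratedDeriv 2 γ₁ u)) ^ ((1:ℝ)/3)) t₀ with hcd1d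
  set cd2 := deriv (fun u => (det2 (deriv γ₂ u) (iteratedDeriv 2 γ₂ u)) ^ ((1:ℝ)/3)) s₀ with hcd2d
  set D := X - ((1 - α) • γ₁ t₀ + α • γ₂ s₀) with hDd
  set Cv := γ₂ s₀ - γ₁ t₀ with hCd
  have hs1pos : (0:ℝ) < s1 := Real.rpow_pos_of_pos (hκ₁ t₀) _
  have hs2pos : (0:ℝ) < s2 := Real.rpow_pos_of_pos (hκ₂ s₀) _
  have hs1ne : s1 ≠ 0 := hs1pos.ne'
  have hs2ne : s2 ≠ 0 := hs2pos.ne'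
  -- raw equation from F = 0
  have hE1 : (1 - α) * ((b1 * Cv.2 - b2 * Cv.1) / s2) * ((a1 * D.2 - a2 * D.1) / s1)
      + α * ((a1 * Cv.2 - a2 * Cv.1) / s1) * ((b1 * D.2 - b2 * D.1) / s2) = 0 := hF0
  -- derivative in t
  have hVq : HasDerivAt (fun u => γ₂ s₀ - γ₁ u) (-(deriv γ₁ t₀)) t₀ :=
    HasDerivAt.const_sub (γ₂ s₀) hd1
  have hVM : HasDerivAt (fun u => X - ((1 - α) • γ₁ u + α • γ₂ s₀))
      (-((1 - α) • deriv γ₁ t₀)) t₀ :=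
    HasDerivAt.const_sub X ((hd1.const_smul (1 - α)).add_const _)
  have hq := key2 γ₂ s₀ _ _ t₀ hVq
  have hr := keyD γ₁ hγ₁i hκ₁ t₀ _ _ hVM
  have hp := keyD γ₁ hγ₁i hκ₁ t₀ _ _ hVq
  have hw := key2 γ₂ s₀ _ _ t₀ hVM
  have hGt : HasDerivAt (fun t => interF γ₁ γ₂ α t s₀ X)
      ((1 - α) * ((b1 * -a2 - b2 * -a1) / s2) * ((a1 * D.2 - a2 * D.1) / s1)
        + (1 - α) * ((b1 * Cv.2 - b2 * Cv.1) / s2) *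
          (((A1 * D.2 + a1 * (-((1 - α) * a2)) - (A2 * D.1 + a2 * (-((1 - α) * a1)))) * s1
            - (a1 * D.2 - a2 * D.1) * cd1) / s1 ^ 2)
        + (α * (((A1 * Cv.2 + a1 * -a2 - (A2 * Cv.1 + a2 * -a1)) * s1
            - (a1 * Cv.2 - a2 * Cv.1) * cd1) / s1 ^ 2) * ((b1 * D.2 - b2 * D.1) / s2)
          + α * ((a1 * Cv.2 - a2 * Cv.1) / s1) *
            ((b1 * (-((1 - α) * a2)) - b2 * (-((1 - α) * a1))) / s2))) t₀ :=
    ((hq.const_mul (1 - α)).mul hr).add ((hp.const_mul α).mul hw)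
  have hE3 := hGt.deriv.symm.trans hFt
  -- derivative in s
  have hVqs : HasDerivAt (fun u => γ₂ u - γ₁ t₀) (deriv γ₂ s₀) s₀ := hd2.sub_const (γ₁ t₀)
  have hVMs : HasDerivAt (fun u => X - ((1 - α) • γ₁ t₀ + α • γ₂ u))
      (-(α • deriv γ₂ s₀)) s₀ :=
    HasDerivAt.const_sub X (HasDerivAt.const_add _ (hd2.const_smul α))
  have hqs := keyD γ₂ hγ₂i hκ₂ s₀ _ _ hVqs
  have hrs := key2 γ₁ t₀ _ _ s₀ hVMs
  have hps := key2 γ₁ t₀ _ _ s₀ hVqs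
  have hws := keyD γ₂ hγ₂i hκ₂ s₀ _ _ hVMs
  have hGs : HasDerivAt (fun s => interF γ₁ γ₂ α t₀ s X)
      ((1 - α) * (((B1 * Cv.2 + b1 * b2 - (B2 * Cv.1 + b2 * b1)) * s2
            - (b1 * Cv.2 - b2 * Cv.1) * cd2) / s2 ^ 2) * ((a1 * D.2 - a2 * D.1) / s1)
        + (1 - α) * ((b1 * Cv.2 - b2 * Cv.1) / s2) *
            ((a1 * (-(α * b2)) - a2 * (-(α * b1))) / s1)
        + (α * ((a1 * b2 - a2 * b1) / s1) * ((b1 * D.2 - b2 * D.1) / s2)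
          + α * ((a1 * Cv.2 - a2 * Cv.1) / s1) *
            (((B1 * D.2 + b1 * (-(α * b2)) - (B2 * D.1 + b2 * (-(α * b1)))) * s2
              - (b1 * D.2 - b2 * D.1) * cd2) / s2 ^ 2))) s₀ :=
    ((hqs.const_mul (1 - α)).mul hrs).add ((hps.const_mul α).mul hws)
  have hE2 := hGs.deriv.symm.trans hFs
  -- the value of b
  have hLb : HasDerivAt (fun u => conormal γ₁ u (deriv γ₁ t₀))
      (((A1 * a2 + a1 * 0 - (A2 * a1 + a2 * 0)) * s1 - (a1 * a2 - a2 * a1) * cd1) / s1 ^ 2) t₀ :=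
    keyD γ₁ hγ₁i hκ₁ t₀ (fun _ => deriv γ₁ t₀) 0 (hasDerivAt_const t₀ (deriv γ₁ t₀))
  have hbv : b = (((A1 * a2 + a1 * 0 - (A2 * a1 + a2 * 0)) * s1
      - (a1 * a2 - a2 * a1) * cd1) / s1 ^ 2) / n2g1 := by rw [hb, hLb.deriv]
  -- coordinates
  set x := (D.1 * b2 - D.2 * b1) / (a1 * b2 - a2 * b1) with hxd
  set y := (a1 * D.2 - a2 * D.1) / (a1 * b2 - a2 * b1) with hyd
  set xC := (Cv.1 * b2 - Cv.2 * b1) / (a1 * b2 - a2 * b1) with hxCd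
  set yC := (a1 * Cv.2 - a2 * Cv.1) / (a1 * b2 - a2 * b1) with hyCd
  have hD1 : D.1 = x * a1 + y * b1 := by rw [hxd, hyd]; rw [div_mul_eq_mul_div, div_mul_eq_mul_div, ← add_div, eq_div_iff hδ]; ring
  have hD2 : D.2 = x * a2 + y * b2 := by rw [hxd, hyd]; rw [div_mul_eq_mul_div, div_mul_eq_mul_div, ← add_div, eq_div_iff hδ]; ring
  have hC1 : Cv.1 = xC * a1 + yC * b1 := by rw [hxCd, hyCd]; rw [div_mul_eq_mul_div, div_mul_eq_mul_div, ← add_div, eq_div_iff hδ]; ring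
  have hC2 : Cv.2 = xC * a2 + yC * b2 := by rw [hxCd, hyCd]; rw [div_mul_eq_mul_div, div_mul_eq_mul_div, ← add_div, eq_div_iff hδ]; ring
  field_simp at hE1 hE2 hE3
  rw [hD1, hD2, hC1, hC2] at hE1 hE2 hE3
  -- clean polynomial equations
  have hP1 : (1 - α) * xC * y + α * yC * x = 0 := by
    have h1' : ((a1 * b2 - a2 * b1) ^ 2 * (s1 * s2)) * ((1 - α) * xC * y + α * yC * x) = 0 := by
      linear_combination -(s1 * s2) * hE1
    exact (mul_eq_zero.mp h1').resolve_left
      (mul_ne_zero (pow_ne_zero 2 hδ) (mul_ne_zero hs1ne hs2ne))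
  have hP3 : (1 - α) * (a1 * b2 - a2 * b1) * y - (A1 * a2 - A2 * a1) * x * xC
      + α * (1 - α) * yC * (a1 * b2 - a2 * b1) = 0 := by
    have h3' : ((a1 * b2 - a2 * b1) * (s1 ^ 4 * s2 ^ 3)) *
        (s1 * ((1 - α) * (a1 * b2 - a2 * b1) * y - (A1 * a2 - A2 * a1) * x * xC
          + α * (1 - α) * yC * (a1 * b2 - a2 * b1))
        + ((a1 * b2 - a2 * b1) * cd1 - s1 * (A1 * b2 - A2 * b1))
            * ((1 - α) * xC * y + α * yC * x)) = 0 := by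
      linear_combination (s1^4*s2^3) * hE3
    have h3'' := (mul_eq_zero.mp h3').resolve_left
      (mul_ne_zero hδ (mul_ne_zero (pow_ne_zero 4 hs1ne) (pow_ne_zero 3 hs2ne)))
    have h3''' : s1 * ((1 - α) * (a1 * b2 - a2 * b1) * y - (A1 * a2 - A2 * a1) * x * xC
        + α * (1 - α) * yC * (a1 * b2 - a2 * b1)) = 0 := by
      linear_combination h3'' - ((a1 * b2 - a2 * b1) * cd1 - s1 * (A1 * b2 - A2 * b1)) * hP1
    exact (mul_eq_zero.mp h3''').resolve_left hs1ne
  have hP2 : (B1 * b2 - B2 * b1) * yC * y + α * (1 - α) * xC * (a1 * b2 - a2 * b1)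
      - α * x * (a1 * b2 - a2 * b1) = 0 := by
    have h2' : ((a1 * b2 - a2 * b1) * (s1 ^ 3 * s2 ^ 4)) *
        ((s2 * (B1 * a2 - B2 * a1) + (a1 * b2 - a2 * b1) * cd2)
            * ((1 - α) * xC * y + α * yC * x)
          + s2 * ((B1 * b2 - B2 * b1) * yC * y + α * (1 - α) * xC * (a1 * b2 - a2 * b1)
            - α * x * (a1 * b2 - a2 * b1))) = 0 := by
      linear_combination (s1^3*s2^4) * hE2
    have h2'' := (mul_eq_zero.mp h2').resolve_left
      (mul_ne_zero hδ (mul_ne_zero (pow_ne_zero 3 hs1ne) (pow_ne_zero 4 hs2ne)))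
    have h2''' : s2 * ((B1 * b2 - B2 * b1) * yC * y + α * (1 - α) * xC * (a1 * b2 - a2 * b1)
        - α * x * (a1 * b2 - a2 * b1)) = 0 := by
      linear_combination h2'' - (s2 * (B1 * a2 - B2 * a1) + (a1 * b2 - a2 * b1) * cd2) * hP1
    exact (mul_eq_zero.mp h2''').resolve_left hs2ne
  -- scalar values of the conormal data
  have hn1g2s : n1g2 = (a1 * b2 - a2 * b1) / s1 := hn1g2
  have hn2g1s : n2g1 = (b1 * a2 - b2 * a1) / s2 := hn2g1
  have hσ' : b1 * a2 - b2 * a1 ≠ 0 := fun h => hδ (by linarith)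
  have hn1Cs : n1C = (a1 * Cv.2 - a2 * Cv.1) / s1 := hn1C
  have hn2Cs : n2C = (b1 * Cv.2 - b2 * Cv.1) / s2 := hn2C
  rw [hC1, hC2] at hn1Cs hn2Cs
  have hn1Cq : n1C = yC * (a1 * b2 - a2 * b1) / s1 := by rw [hn1Cs]; ring
  have hn2Cq : n2C = -(xC * (a1 * b2 - a2 * b1)) / s2 := by rw [hn2Cs]; ring
  have hb2v : b = -((A1 * a2 - A2 * a1) * s2) / (s1 * (a1 * b2 - a2 * b1)) := by
    rw [hbv, hn2g1s]
    field_simp [show a2 * b1 - a1 * b2 ≠ 0 from fun h => hδ (by linarith)]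
    ring
  have hDexp : D = x • deriv γ₁ t₀ + y • deriv γ₂ s₀ := Prod.ext hD1 hD2
  by_cases hn2C0 : n2C = 0
  · -- degenerate case: the two conormal values of C vanish
    have hn1C0 : n1C = 0 := by rw [henv, hn2C0, mul_zero]
    have hyC0 : yC = 0 := by
      have h0 : yC * (a1 * b2 - a2 * b1) / s1 = 0 := hn1Cq.symm.trans hn1C0
      exact (mul_eq_zero.mp ((div_eq_zero_iff.mp h0).resolve_right hs1ne)).resolve_right hδ
    have hxC0 : xC = 0 := by
      have h0 : -(xC * (a1 * b2 - a2 * b1)) / s2 = 0 := hn2Cq.symm.trans hn2C0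
      have h1 := neg_eq_zero.mp ((div_eq_zero_iff.mp h0).resolve_right hs2ne)
      exact (mul_eq_zero.mp h1).resolve_right hδ
    rw [hxC0, hyC0] at hP2 hP3
    have hy0 : y = 0 := by
      have h0 : (1 - α) * ((a1 * b2 - a2 * b1) * y) = 0 := by linear_combination hP3
      exact (mul_eq_zero.mp ((mul_eq_zero.mp h0).resolve_left h1α.ne')).resolve_left hδ
    have hx0 : x = 0 := by
      have h0 : α * ((a1 * b2 - a2 * b1) * x) = 0 := by linear_combination -hP2
      exact (mul_eq_zero.mp ((mul_eq_zero.mp h0).resolve_left hα0.ne')).resolve_left hδ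
    rw [hDexp, hx0, hy0, hn1C0]
    simp
  · -- main case
    have hlampos : (0:ℝ) < lam := by
      rw [hlam]; exact Real.rpow_pos_of_pos (div_pos h1α hα0) _
    have hn1Cne : n1C ≠ 0 := by
      rw [henv]; exact mul_ne_zero (neg_ne_zero.mpr hlampos.ne') hn2C0
    have hyCne : yC ≠ 0 := by
      intro h; exact hn1Cne (by rw [hn1Cq, h]; simp)
    have hxCne : xC ≠ 0 := by
      intro h; exact hn2C0 (by rw [hn2Cq, h]; simp)
    have hxQ : x * (α * (a1 * b2 - a2 * b1) * yC + (A1 * a2 - A2 * a1) * xC ^ 2)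
        = α * (1 - α) * yC * (a1 * b2 - a2 * b1) * xC := by
      linear_combination (-xC) * hP3 + (a1 * b2 - a2 * b1) * hP1
    have hQne : α * (a1 * b2 - a2 * b1) * yC + (A1 * a2 - A2 * a1) * xC ^ 2 ≠ 0 := by
      intro h
      have h2 := hxQ
      rw [h, mul_zero] at h2
      exact (mul_ne_zero (mul_ne_zero (mul_ne_zero (mul_ne_zero hα0.ne' h1α.ne') hyCne) hδ)
        hxCne) h2.symm
    have hxv : x = α * (1 - α) * yC * (a1 * b2 - a2 * b1) * xC
        / (α * (a1 * b2 - a2 * b1) * yC + (A1 * a2 - A2 * a1) * xC ^ 2) := by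
      rw [eq_div_iff hQne]; linear_combination hxQ
    have hyv : y = -(α ^ 2 * yC ^ 2 * (a1 * b2 - a2 * b1))
        / (α * (a1 * b2 - a2 * b1) * yC + (A1 * a2 - A2 * a1) * xC ^ 2) := by
      rw [eq_div_iff hQne]
      have hcan : ((1 - α) * xC) *
          (y * (α * (a1 * b2 - a2 * b1) * yC + (A1 * a2 - A2 * a1) * xC ^ 2))
          = ((1 - α) * xC) * (-(α ^ 2 * yC ^ 2 * (a1 * b2 - a2 * b1))) := by
        linear_combination (α * (a1 * b2 - a2 * b1) * yC + (A1 * a2 - A2 * a1) * xC ^ 2) * hP1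
          + (-(α * yC)) * hxQ
      exact mul_left_cancel₀ (mul_ne_zero h1α.ne' hxCne) hcan
    have hΔ : α * n2g1 * n1C + b * n2C ^ 2
        = -((a1 * b2 - a2 * b1) * (α * (a1 * b2 - a2 * b1) * yC + (A1 * a2 - A2 * a1) * xC ^ 2))
          / (s1 * s2) := by
      rw [hn2g1s, hn1Cq, hn2Cq, hb2v]
      field_simp
      ring
    have HS1 : α * n1C / (α * n2g1 * n1C + b * n2C ^ 2) * ((1 - α) * n2C) = x := by
      rw [hΔ, hn1Cq, hn2Cq, hxv]
      field_simp
    have HS2 : α * n1C / (α * n2g1 * n1C + b * n2C ^ 2) * (α * n1C * n2g1 / n1g2) = -y := by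
      rw [hΔ, hn1Cq, hn2g1s, hn1g2s, hyv]
      field_simp
      ring
    rw [hDexp, smul_sub, smul_smul, smul_smul, HS1, HS2, neg_smul, sub_neg_eq_add]
end

section
/- With notation as above and α = 1/2, the limit of the slope of the mid-line as s → t equals [f′(t)·(1/3)(f″(t))^(−2/3)f‴(t) − (f″(t))^(4/3)] / [(1/3)(f″(t))^(−2/3)f‴(t)], provided f″(t) ≠ 0 and f‴(t) ≠ 0; this is the slope of the affine normal direction of the graph of f at t. -/
open Real Filter

lemma rpow_facts18 (c : ℝ) (hc : c ≠ 0) :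
    c ^ ((1:ℝ)/3) * c = c ^ ((4:ℝ)/3) ∧
    c ^ (-(2:ℝ)/3) ≠ 0 ∧
    c ^ (-(5:ℝ)/3) ≠ 0 ∧
    c ^ ((4:ℝ)/3) * c ^ (-(5:ℝ)/3) = c ^ (-(2:ℝ)/3) * c * c ^ (-(2:ℝ)/3) := by
  rcases hc.lt_or_gt with hneg | hpos
  · set E : ℝ := Real.exp (Real.log c * (1/3)) with hE_def
    have hE : 0 < E := Real.exp_pos _
    have hexp : ∀ n : ℕ, Real.exp (Real.log c * (n/3)) = E ^ n := by
      intro n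
      rw [show Real.log c * ((n:ℝ)/3) = (n:ℝ) * (Real.log c * (1/3)) by ring,
        Real.exp_nat_mul]
    have hcE : c = -E ^ 3 := by
      have h1 : Real.exp (Real.log c) = -c := by
        rw [show Real.log c = Real.log (-c) by rw [Real.log_neg_eq_log],
          Real.exp_log (by linarith)]
      have h2 : Real.exp (Real.log c * ((3:ℕ)/3)) = E ^ 3 := hexp 3
      norm_num at h2
      rw [h1] at h2
      linarith
    have h13 : c ^ ((1:ℝ)/3) = E * (1/2) := by
      rw [Real.rpow_def_of_neg hneg, show (1:ℝ)/3*π = π/3 by ring, Real.cos_pi_div_three]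
    have h43 : c ^ ((4:ℝ)/3) = E ^ 4 * (-(1/2)) := by
      rw [Real.rpow_def_of_neg hneg]
      have e4 : Real.exp (Real.log c * ((4:ℝ)/3)) = E ^ 4 := by
        have := hexp 4; norm_num at this ⊢; exact this
      have c4 : Real.cos ((4:ℝ)/3*π) = -(1/2) := by
        rw [show (4:ℝ)/3*π = π + π/3 by ring, Real.cos_add, Real.cos_pi, Real.sin_pi,
          Real.cos_pi_div_three]; ring
      rw [e4, c4]
    have h2m : c ^ (-(2:ℝ)/3) = (E^2)⁻¹ * (-(1/2)) := by
      rw [Real.rpow_def_of_neg hneg]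
      have e2 : Real.exp (Real.log c * (-(2:ℝ)/3)) = (E^2)⁻¹ := by
        rw [show Real.log c * (-(2:ℝ)/3) = -(Real.log c * ((2:ℕ)/3)) by push_cast; ring,
          Real.exp_neg, hexp 2]
      have c2 : Real.cos (-(2:ℝ)/3*π) = -(1/2) := by
        rw [show -(2:ℝ)/3*π = -(π - π/3) by ring, Real.cos_neg, Real.cos_pi_sub,
          Real.cos_pi_div_three]
      rw [e2, c2]
    have h5m : c ^ (-(5:ℝ)/3) = (E^5)⁻¹ * (1/2) := by
      rw [Real.rpow_def_of_neg hneg]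
      have e5 : Real.exp (Real.log c * (-(5:ℝ)/3)) = (E^5)⁻¹ := by
        rw [show Real.log c * (-(5:ℝ)/3) = -(Real.log c * ((5:ℕ)/3)) by push_cast; ring,
          Real.exp_neg, hexp 5]
      have c5 : Real.cos (-(5:ℝ)/3*π) = 1/2 := by
        rw [show -(5:ℝ)/3*π = -(π + (π - π/3)) by ring, Real.cos_neg, Real.cos_add,
          Real.cos_pi, Real.sin_pi, Real.cos_pi_sub, Real.cos_pi_div_three]; ring
      rw [e5, c5]
    refine ⟨by rw [h13, h43, hcE]; ring, by rw [h2m]; positivity, by rw [h5m]; positivity, ?_⟩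
    rw [h43, h5m, h2m, hcE]; field_simp
  · have hadd : ∀ y z : ℝ, c ^ (y + z) = c ^ y * c ^ z := fun y z => Real.rpow_add hpos y z
    have hne : ∀ y : ℝ, c ^ y ≠ 0 := fun y => (Real.rpow_pos_of_pos hpos y).ne'
    refine ⟨?_, hne _, hne _, ?_⟩
    · rw [show (4:ℝ)/3 = 1/3 + 1 by norm_num, Real.rpow_add_one hpos.ne']
    · rw [← hadd, mul_right_comm, ← hadd, ← Real.rpow_add_one hpos.ne']
      norm_num


/-- For `α = 1/2`, the slope of the mid-line of `(t, f t)` and `(s, f s)` tends, as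
`s → t`, to `[f′(t)·(1/3)(f″(t))^(−2/3)f‴(t) − (f″(t))^(4/3)] / [(1/3)(f″(t))^(−2/3)f‴(t)]`,
which is the slope of the affine normal
`ξ(t) = κ^(−2/3)γ_tt − (1/3)κ_tκ^(−5/3)γ_t` (with `κ = f″`) of the graph of `f`. -/
theorem stmt18 (f : ℝ → ℝ) (t L : ℝ) (A : ℝ → ℝ)
    (hf : ContDiff ℝ (⊤ : ℕ∞) f)
    (hf'' : deriv (deriv f) t ≠ 0) (hf''' : iteratedDeriv 3 f t ≠ 0)
    (hA : ∀ s, A s =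
      (deriv f t * (deriv (deriv f) s) ^ ((1:ℝ)/3)
        - deriv f s * (deriv (deriv f) t) ^ ((1:ℝ)/3)) /
      ((deriv (deriv f) s) ^ ((1:ℝ)/3) - (deriv (deriv f) t) ^ ((1:ℝ)/3)))
    (hL : L = (deriv f t * (1/3) * (deriv (deriv f) t) ^ (-(2:ℝ)/3) * iteratedDeriv 3 f t
        - (deriv (deriv f) t) ^ ((4:ℝ)/3)) /
      ((1/3) * (deriv (deriv f) t) ^ (-(2:ℝ)/3) * iteratedDeriv 3 f t)) :
    Tendsto A (nhdsWithin t {t}ᶜ) (nhds L) ∧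
    (let κ := deriv (deriv f)
     let ξ : ℝ × ℝ :=
       (κ t ^ (-(2:ℝ)/3)) • ((0:ℝ), κ t)
         - ((1/3) * deriv κ t * κ t ^ (-(5:ℝ)/3)) • ((1:ℝ), deriv f t)
     L = ξ.2 / ξ.1) := by
  set c : ℝ := deriv (deriv f) t with hc_def
  set d : ℝ := iteratedDeriv 3 f t with hd_def
  set p : ℝ := deriv f t with hp_def
  obtain ⟨key1, key2, key3, key4⟩ := rpow_facts18 c hf''
  -- differentiability
  have hf0 : ContDiff ℝ (↑(⊤:ℕ∞)) f := hf.of_le (by simp)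
  have hdf := contDiff_infty_iff_deriv.mp hf0
  have hdf2 := contDiff_infty_iff_deriv.mp hdf.2
  have hdf3 : Differentiable ℝ (deriv (deriv f)) := (contDiff_infty_iff_deriv.mp hdf2.2).1
  have hd_eq : deriv (deriv (deriv f)) t = d := by
    rw [hd_def]
    simp [iteratedDeriv_succ, iteratedDeriv_one]
  -- derivatives
  have h1 : HasDerivAt (deriv f) c t := (hdf2.1 t).hasDerivAt
  have h2 : HasDerivAt (deriv (deriv f)) d t := hd_eq ▸ (hdf3 t).hasDerivAt
  set g : ℝ → ℝ := fun s => (deriv (deriv f) s) ^ ((1:ℝ)/3) with hg_def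
  set g' : ℝ := 1/3 * c ^ (-(2:ℝ)/3) * d with hg'_def
  have hg : HasDerivAt g g' t := by
    have houter : HasDerivAt (fun x : ℝ => x ^ ((1:ℝ)/3)) ((1:ℝ)/3 * c ^ ((1:ℝ)/3 - 1)) c :=
      Real.hasDerivAt_rpow_const (Or.inl hf'')
    have hcomp := houter.comp t h2
    have hex : (1:ℝ)/3 - 1 = -(2:ℝ)/3 := by norm_num
    rw [hex] at hcomp
    exact hcomp
  have hg'ne : g' ≠ 0 := by
    rw [hg'_def]
    exact mul_ne_zero (mul_ne_zero (by norm_num) key2) hf'''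
  have hgt : g t = c ^ ((1:ℝ)/3) := rfl
  -- limits of slopes
  have hs1 : Tendsto (slope (deriv f) t) (nhdsWithin t {t}ᶜ) (nhds c) :=
    hasDerivAt_iff_tendsto_slope.mp h1
  have hs2 : Tendsto (slope g t) (nhdsWithin t {t}ᶜ) (nhds g') :=
    hasDerivAt_iff_tendsto_slope.mp hg
  have hne : ∀ᶠ s in nhdsWithin t {t}ᶜ, slope g t s ≠ 0 := hs2.eventually_ne hg'ne
  have hr : Tendsto (fun s => p - g t * (slope (deriv f) t s / slope g t s))
      (nhdsWithin t {t}ᶜ) (nhds (p - g t * (c / g'))) :=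
    tendsto_const_nhds.sub (tendsto_const_nhds.mul (hs1.div hs2 hg'ne))
  have heq : ∀ᶠ s in nhdsWithin t {t}ᶜ,
      p - g t * (slope (deriv f) t s / slope g t s) = A s := by
    filter_upwards [hne, self_mem_nhdsWithin] with s hgs hst
    have hst' : s - t ≠ 0 := sub_ne_zero.mpr hst
    have hggs : g s - g t ≠ 0 := by
      intro h
      apply hgs
      rw [slope_def_field, h, zero_div]
    rw [hA s, slope_def_field, slope_def_field]
    have hgs_eq : (deriv (deriv f) s) ^ ((1:ℝ)/3) = g s := rfl
    rw [hgs_eq, ← hgt]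
    field_simp
    ring
  have hLval : L = p - g t * (c / g') := by
    rw [hL, hgt, hg'_def]
    have h3 : (1/3 : ℝ) * c ^ (-(2:ℝ)/3) * d ≠ 0 := hg'_def ▸ hg'ne
    field_simp
    have hx : c ^ (-((2:ℝ)/3)) * (c ^ (-((2:ℝ)/3)))⁻¹ = 1 :=
      mul_inv_cancel₀ (by rw [← neg_div]; exact key2)
    linear_combination (3 * (c ^ (-((2:ℝ)/3)))⁻¹) * key1 + p * d * hx
  constructor
  · rw [hLval]
    exact hr.congr' heq
  · intro κ ξ
    have hκd : deriv κ t = d := hd_eq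
    have hξ1 : ξ.1 = -(1/3 * d * c ^ (-(5:ℝ)/3)) := by
      simp only [ξ, Prod.fst_sub, Prod.smul_mk, smul_eq_mul, hκd]
      ring
    have hξ2 : ξ.2 = c ^ (-(2:ℝ)/3) * c - 1/3 * d * c ^ (-(5:ℝ)/3) * p := by
      simp only [ξ, Prod.snd_sub, Prod.smul_mk, smul_eq_mul, hκd]
      rfl
    have hden : (1/3 : ℝ) * d * c ^ (-(5:ℝ)/3) ≠ 0 :=
      mul_ne_zero (mul_ne_zero (by norm_num) hf''') key3
    rw [hξ1, hξ2, hL]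
    rw [div_eq_div_iff (by exact mul_ne_zero (mul_ne_zero (by norm_num) key2) hf''')
      (neg_ne_zero.mpr hden)]
    linear_combination ((1:ℝ)/3) * d * key4
end
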